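/- arXiv:2503.15933 — 4 statements merged into one kernel-verified Lean document; each statement's English description precedes it below -/
import Mathlib

section
/- Let γ be a closed convex cone in ℝ^n with nonempty interior, and let γ̊ denote its interior. Then the family of sets {γ̊ − a : a ∈ ℝ^n} forms a basis of the γ-topology: each γ̊ − a is γ-open, and for every γ-open set U and every x ∈ U there exists a ∈ ℝ^n with x ∈ γ̊ − a ⊆ U. -/
/-!
The interior of a convex cone `γ` absorbs `γ` (`γ̊ + γ ⊆ γ̊`, since `γ̊ + γ` is open and lies in `γ`),
and `0` lies in the closure of `γ̊` (take `t • e → 0` with `e ∈ γ̊`). Hence every open `V ∋ x`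
contains `x - c` for some `c ∈ γ̊`. For `V = γ̊` this gives `γ̊ ⊆ γ̊ + γ`, so each `γ̊ - a` is γ-open.
For a γ-open `U ∋ x`, put `a = c - x`: then `x ∈ γ̊ - a = (x - c) + γ̊ ⊆ U + γ = U`.
-/

open Pointwise Filter Topology

section ConeInterior

variable {E : Type*} [TopologicalSpace E] {γ : Set E}

theorem interior_add_subset_interior_of_add_mem [AddGroup E] [IsTopologicalAddGroup E]
    (hadd : ∀ x ∈ γ, ∀ y ∈ γ, x + y ∈ γ) :
    interior γ + γ ⊆ interior γ := by
  refine interior_maximal ?_ isOpen_interior.add_right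
  rintro _ ⟨x, hx, y, hy, rfl⟩
  exact hadd x (interior_subset hx) y hy

theorem smul_mem_interior_of_smul_mem [AddCommMonoid E] [Module ℝ E] [ContinuousConstSMul ℝ E]
    (hsmul : ∀ c : ℝ, 0 < c → ∀ x ∈ γ, c • x ∈ γ)
    {c : ℝ} (hc : 0 < c) {x : E} (hx : x ∈ interior γ) : c • x ∈ interior γ := by
  have hsub : interior (c • γ) ⊆ interior γ :=
    interior_mono (Set.smul_set_subset_iff.mpr fun y hy => hsmul c hc y hy)
  rw [interior_smul₀ hc.ne'] at hsub
  exact hsub (Set.smul_mem_smul_set hx)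

theorem zero_mem_closure_interior_of_smul_mem [AddCommMonoid E] [Module ℝ E] [ContinuousSMul ℝ E]
    (hsmul : ∀ c : ℝ, 0 < c → ∀ x ∈ γ, c • x ∈ γ)
    (hint : (interior γ).Nonempty) : (0 : E) ∈ closure (interior γ) := by
  obtain ⟨e, he⟩ := hint
  have htend : Tendsto (fun t : ℝ => t • e) (𝓝[>] 0) (𝓝 0) := by
    have h : Tendsto (fun t : ℝ => t • e) (𝓝 0) (𝓝 ((0 : ℝ) • e)) := tendsto_id.smul_const e
    simpa using h.mono_left nhdsWithin_le_nhds
  refine mem_closure_of_tendsto htend ?_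
  filter_upwards [self_mem_nhdsWithin] with t ht
  exact smul_mem_interior_of_smul_mem hsmul ht he

theorem exists_mem_interior_sub_mem_of_isOpen [AddCommGroup E] [IsTopologicalAddGroup E]
    [Module ℝ E] [ContinuousSMul ℝ E] (hsmul : ∀ c : ℝ, 0 < c → ∀ x ∈ γ, c • x ∈ γ)
    (hint : (interior γ).Nonempty) {V : Set E} (hV : IsOpen V) {x : E} (hx : x ∈ V) :
    ∃ c ∈ interior γ, x - c ∈ V := by
  have hnhds : {c | x - c ∈ V} ∈ 𝓝 (0 : E) :=
    (hV.preimage (continuous_const.sub continuous_id)).mem_nhds (by simpa using hx)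
  obtain ⟨c, hcV, hc⟩ :=
    mem_closure_iff_nhds.mp (zero_mem_closure_interior_of_smul_mem hsmul hint) _ hnhds
  exact ⟨c, hc, hcV⟩

end ConeInterior

theorem gammaInterior_translates_basis_general {n : ℕ} (γ : Set (EuclideanSpace ℝ (Fin n)))
    (hadd : ∀ x ∈ γ, ∀ y ∈ γ, x + y ∈ γ)
    (hsmul : ∀ c : ℝ, 0 < c → ∀ x ∈ γ, c • x ∈ γ)
    (hint : (interior γ).Nonempty) :
    (∀ a : EuclideanSpace ℝ (Fin n),
        IsOpen {x : EuclideanSpace ℝ (Fin n) | x + a ∈ interior γ} ∧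
        {x : EuclideanSpace ℝ (Fin n) | x + a ∈ interior γ} + γ =
          {x : EuclideanSpace ℝ (Fin n) | x + a ∈ interior γ}) ∧
    (∀ U : Set (EuclideanSpace ℝ (Fin n)), IsOpen U → U + γ = U →
        ∀ x ∈ U, ∃ a : EuclideanSpace ℝ (Fin n),
          x ∈ {y : EuclideanSpace ℝ (Fin n) | y + a ∈ interior γ} ∧
          {y : EuclideanSpace ℝ (Fin n) | y + a ∈ interior γ} ⊆ U) := by
  refine ⟨fun a => ⟨isOpen_interior.preimage (continuous_id.add continuous_const), ?_⟩, ?_⟩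
  · apply Set.Subset.antisymm
    · rintro _ ⟨y, hy, g, hg, rfl⟩
      simpa only [Set.mem_ofPred_eq, add_right_comm] using
        interior_add_subset_interior_of_add_mem hadd (Set.add_mem_add hy hg)
    · intro y hy
      obtain ⟨c, hc, hyc⟩ := exists_mem_interior_sub_mem_of_isOpen hsmul hint isOpen_interior hy
      refine ⟨y - c, ?_, c, interior_subset hc, sub_add_cancel y c⟩
      simpa only [Set.mem_ofPred_eq, sub_add_eq_add_sub] using hyc
  · intro U hU hUγ x hx
    obtain ⟨c, hc, hxc⟩ := exists_mem_interior_sub_mem_of_isOpen hsmul hint hU hx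
    refine ⟨c - x, by simpa only [Set.mem_ofPred_eq, add_sub_cancel] using hc, fun y hy => ?_⟩
    rw [← hUγ]
    exact ⟨x - c, hxc, y + (c - x), interior_subset hy, by simp only; abel⟩

/-- For a closed convex cone `γ ⊆ ℝⁿ` with nonempty interior, the translates
`γ̊ - a = {x | x + a ∈ interior γ}` of the interior form a basis of the γ-topology:
each is γ-open, and every γ-open set is a union of such sets. -/
theorem gammaInterior_translates_basis {n : ℕ} (γ : Set (EuclideanSpace ℝ (Fin n)))
    (hclosed : IsClosed γ)
    (hadd : ∀ x ∈ γ, ∀ y ∈ γ, x + y ∈ γ)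
    (hsmul : ∀ c : ℝ, 0 < c → ∀ x ∈ γ, c • x ∈ γ)
    (hint : (interior γ).Nonempty) :
    (∀ a : EuclideanSpace ℝ (Fin n),
        IsOpen {x : EuclideanSpace ℝ (Fin n) | x + a ∈ interior γ} ∧
        {x : EuclideanSpace ℝ (Fin n) | x + a ∈ interior γ} + γ =
          {x : EuclideanSpace ℝ (Fin n) | x + a ∈ interior γ}) ∧
    (∀ U : Set (EuclideanSpace ℝ (Fin n)), IsOpen U → U + γ = U →
        ∀ x ∈ U, ∃ a : EuclideanSpace ℝ (Fin n),
          x ∈ {y : EuclideanSpace ℝ (Fin n) | y + a ∈ interior γ} ∧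
          {y : EuclideanSpace ℝ (Fin n) | y + a ∈ interior γ} ⊆ U) :=
  gammaInterior_translates_basis_general γ hadd hsmul hint
end

section
/- Let σ₁ and σ₂ be polyhedral closed convex cones in ℝ^n such that τ = σ₁ ∩ σ₂ is a face of both σ₁ and σ₂. Then for any m in the relative interior of σ₁∨ ∩ (−σ₂∨), one has σ₁ ∩ H_m = τ = σ₂ ∩ H_m, where H_m = {n ∈ ℝ^n : ⟨m, n⟩ = 0}. -/
/-!
Write `C = σ₁∨ ∩ (−σ₂∨)`, the dual of the cone `σ₁ − σ₂`. A functional `⟪·, x⟫` that is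
nonnegative on `C` and vanishes at a relative interior point `m` vanishes on all of `C`.
Polyhedral cones are finitely generated (Fourier–Motzkin elimination), so `σ₁ − σ₂` is finitely
generated, hence closed (conic Carathéodory) and equal to its double dual; thus `x ∈ σᵢ ∩ H_m`
forces both `x` and `−x` into `σ₁ − σ₂`. From `x = a − b` and `−x = a' − b'` we get
`a + a' = b + b' ∈ τ`, and as `τ` is a face of both cones, `a, b ∈ τ`. The hyperplane cutting
`τ` out of `σᵢ` then contains `x = a − b`, so `x ∈ τ`.
-/

open scoped RealInnerProductSpace Pointwise

/-- The polar dual cone of a subset of `ℝⁿ`. -/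
def dualCone {n : ℕ} (σ : Set (EuclideanSpace ℝ (Fin n))) : Set (EuclideanSpace ℝ (Fin n)) :=
  {v | ∀ w ∈ σ, 0 ≤ ⟪v, w⟫}

/-- A polyhedral cone: a finite intersection of closed linear half-spaces. -/
def IsPolyhedralCone {n : ℕ} (σ : Set (EuclideanSpace ℝ (Fin n))) : Prop :=
  ∃ s : Finset (EuclideanSpace ℝ (Fin n)), σ = {x | ∀ m ∈ s, 0 ≤ ⟪m, x⟫}

/-- `τ` is a face of `σ`: it is cut out of `σ` by a supporting hyperplane `⟪m, ·⟫ = 0`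
with `m` in the dual cone of `σ`. -/
def IsFaceOf {n : ℕ} (τ σ : Set (EuclideanSpace ℝ (Fin n))) : Prop :=
  ∃ m ∈ dualCone σ, τ = σ ∩ {x | ⟪m, x⟫ = 0}

open Set Topology

section FourierMotzkinIdentity

variable {R M ι : Type*} [CommRing R] [AddCommGroup M] [Module R M] {v : ι → M}

theorem sum_sum_smul_map_smul_sub (f : M →ₗ[R] R) (A N : Finset ι) (c : ι → R) :
    ∑ i ∈ A, ∑ j ∈ N, (c i * c j) • (f (v i) • v j - f (v j) • v i) =
      f (∑ i ∈ A, c i • v i) • ∑ j ∈ N, c j • v j -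
        f (∑ j ∈ N, c j • v j) • ∑ i ∈ A, c i • v i := by
  have hterm : ∀ i j, (c i * c j) • (f (v i) • v j - f (v j) • v i) =
      (c i * f (v i)) • (c j • v j) - (c j * f (v j)) • (c i • v i) := fun i j ↦ by module
  simp only [hterm, Finset.sum_sub_distrib, ← Finset.smul_sum, ← Finset.sum_smul]
  simp [map_sum, Finset.sum_smul, Finset.smul_sum]

end FourierMotzkinIdentity

namespace PointedCone

section OrderedField

variable {𝕜 E : Type*} [Field 𝕜] [LinearOrder 𝕜] [IsStrictOrderedRing 𝕜]
  [AddCommGroup E] [Module 𝕜 E] {ι : Type*} {v : ι → E}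

theorem mem_hull_range_iff [Fintype ι] {x : E} :
    x ∈ hull 𝕜 (range v) ↔ ∃ c : ι → 𝕜, 0 ≤ c ∧ ∑ i, c i • v i = x := by
  rw [Submodule.mem_span_range_iff_exists_fun]
  constructor
  · rintro ⟨c, rfl⟩
    exact ⟨fun i ↦ c i, fun i ↦ (c i).2, rfl⟩
  · rintro ⟨c, hc, rfl⟩
    exact ⟨fun i ↦ ⟨c i, hc i⟩, rfl⟩

theorem hull_union_neg (s : Set E) : hull 𝕜 (s ∪ -s) = Submodule.span 𝕜 s := by
  refine le_antisymm (Submodule.span_le.mpr <| union_subset Submodule.subset_span fun x hx ↦ ?_)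
    fun x hx ↦ ?_
  · simpa using (Submodule.span 𝕜 s).neg_mem (Submodule.subset_span hx)
  · suffices x ∈ hull 𝕜 (s ∪ -s) ∧ -x ∈ hull 𝕜 (s ∪ -s) from this.1
    induction hx using Submodule.span_induction with
    | mem x hx => exact ⟨subset_hull (.inl hx), subset_hull (.inr (by simpa using hx))⟩
    | zero => simp
    | add x y _ _ hx hy => exact ⟨add_mem hx.1 hy.1, by rw [neg_add]; exact add_mem hx.2 hy.2⟩
    | smul a x _ hx =>
      rcases le_total 0 a with ha | ha
      · exact ⟨smul_mem _ ha hx.1, by simpa using smul_mem _ ha hx.2⟩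
      · exact ⟨by simpa using smul_mem _ (neg_nonneg.mpr ha) hx.2,
          by simpa using smul_mem _ (neg_nonneg.mpr ha) hx.1⟩

theorem fg_top [Module.Finite 𝕜 E] : (⊤ : PointedCone 𝕜 E).FG := by
  obtain ⟨s, hs⟩ := Module.Finite.fg_top (R := 𝕜) (M := E)
  refine Submodule.fg_def.mpr ⟨s ∪ -s, s.finite_toSet.union s.finite_toSet.neg, ?_⟩
  exact (hull_union_neg (s : Set E)).trans (by rw [hs]; rfl)

theorem fg_neg {C : PointedCone 𝕜 E} (hC : C.FG) : (-C).FG := by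
  obtain ⟨s, hs, rfl⟩ := Submodule.fg_def.mp hC
  exact Submodule.fg_def.mpr ⟨-s, hs.neg, Submodule.span_neg_eq_neg s⟩

/-- Generators of `hull 𝕜 (range v) ⊓ {f ≥ 0}`: the `v i` with `f (v i) ≥ 0`, and for every pair
with `f (v i) ≥ 0 > f (v j)` the combination of `v i` and `v j` that lies on `ker f`. -/
def fourierMotzkin (v : ι → E) (f : E →ₗ[𝕜] 𝕜) : Set E :=
  v '' {i | 0 ≤ f (v i)} ∪
    (fun p : ι × ι ↦ f (v p.1) • v p.2 - f (v p.2) • v p.1) '' {p | 0 ≤ f (v p.1) ∧ f (v p.2) < 0}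

theorem hull_fourierMotzkin_le (v : ι → E) (f : E →ₗ[𝕜] 𝕜) :
    hull 𝕜 (fourierMotzkin v f) ≤ hull 𝕜 (range v) ⊓ (positive 𝕜 𝕜).comap f := by
  refine Submodule.span_le.mpr (union_subset ?_ ?_)
  · rintro _ ⟨i, hi, rfl⟩
    exact ⟨subset_hull (mem_range_self i), hi⟩
  · rintro _ ⟨⟨i, j⟩, ⟨hi, hj⟩, rfl⟩
    refine ⟨show f (v i) • v j - f (v j) • v i ∈ hull 𝕜 (range v) from ?_, by simp [mul_comm]⟩
    rw [show f (v i) • v j - f (v j) • v i = f (v i) • v j + (-f (v j)) • v i by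
      simp [sub_eq_add_neg]]
    exact add_mem (smul_mem _ hi (subset_hull (mem_range_self j)))
      (smul_mem _ (by linarith) (subset_hull (mem_range_self i)))

theorem sum_smul_eq_zero_of_map_nonneg {f : E →ₗ[𝕜] 𝕜} {N : Finset ι} {c : ι → 𝕜} (hc : 0 ≤ c)
    (hN : ∀ j ∈ N, f (v j) < 0) (hf : 0 ≤ f (∑ j ∈ N, c j • v j)) : ∑ j ∈ N, c j • v j = 0 := by
  have hnonpos : ∀ j ∈ N, c j * f (v j) ≤ 0 := fun j hj ↦
    mul_nonpos_of_nonneg_of_nonpos (hc j) (hN j hj).le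
  have hterms := (Finset.sum_eq_zero_iff_of_nonpos hnonpos).mp
    (le_antisymm (Finset.sum_nonpos hnonpos) (by simpa using hf))
  exact Finset.sum_eq_zero fun j hj ↦ by
    simp [(mul_eq_zero.mp (hterms j hj)).resolve_right (hN j hj).ne]

theorem le_hull_fourierMotzkin [Fintype ι] (v : ι → E) (f : E →ₗ[𝕜] 𝕜) :
    hull 𝕜 (range v) ⊓ (positive 𝕜 𝕜).comap f ≤ hull 𝕜 (fourierMotzkin v f) := by
  classical
  rintro _ ⟨hx, hfx⟩
  obtain ⟨c, hc, rfl⟩ := mem_hull_range_iff.mp hx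
  set A := Finset.univ.filter fun i ↦ 0 ≤ f (v i)
  set N := Finset.univ.filter fun i ↦ ¬ 0 ≤ f (v i)
  have hA : ∀ i ∈ A, 0 ≤ f (v i) := fun i hi ↦ (Finset.mem_filter.mp hi).2
  have hN : ∀ j ∈ N, f (v j) < 0 := fun j hj ↦ not_le.mp (Finset.mem_filter.mp hj).2
  set a := ∑ i ∈ A, c i • v i
  set b := ∑ j ∈ N, c j • v j
  have hab : ∑ i, c i • v i = a + b := (Finset.sum_filter_add_sum_filter_not _ _ _).symm
  have ha : a ∈ hull 𝕜 (fourierMotzkin v f) := sum_mem fun i hi ↦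
    smul_mem _ (hc i) (subset_hull (.inl ⟨i, hA i hi, rfl⟩))
  have hT : f a • b - f b • a ∈ hull 𝕜 (fourierMotzkin v f) := by
    rw [← sum_sum_smul_map_smul_sub]
    exact sum_mem fun i hi ↦ sum_mem fun j hj ↦ smul_mem _ (mul_nonneg (hc i) (hc j))
      (subset_hull (.inr ⟨(i, j), ⟨hA i hi, hN j hj⟩, rfl⟩))
  have hfa : 0 ≤ f a := by
    simp only [a, map_sum, map_smul, smul_eq_mul]
    exact Finset.sum_nonneg fun i hi ↦ mul_nonneg (hc i) (hA i hi)
  have hfab : 0 ≤ f a + f b := by simpa [hab] using hfx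
  rw [hab]
  rcases hfa.eq_or_lt with hfa0 | hfa0
  · have hb : b = 0 := sum_smul_eq_zero_of_map_nonneg hc hN (by linarith)
    rwa [hb, add_zero]
  · have : a + b = ((f a + f b) / f a) • a + (f a)⁻¹ • (f a • b - f b • a) := by
      match_scalars <;> field_simp; ring
    rw [this]
    exact add_mem (smul_mem _ (div_nonneg hfab hfa0.le) ha)
      (smul_mem _ (inv_nonneg.mpr hfa0.le) hT)

theorem fg_inf_comap_positive {C : PointedCone 𝕜 E} (hC : C.FG) (f : E →ₗ[𝕜] 𝕜) :
    (C ⊓ (positive 𝕜 𝕜).comap f).FG := by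
  obtain ⟨k, v, rfl⟩ := Submodule.fg_iff_exists_fin_generating_family.mp hC
  rw [← le_antisymm (hull_fourierMotzkin_le v f) (le_hull_fourierMotzkin v f)]
  exact Submodule.fg_span (((finite_range v).subset (image_subset_range _ _)).union
    ((finite_range _).subset (image_subset_range _ _)))

theorem DualFG.fg {M : Type*} [AddCommGroup M] [Module 𝕜 M] [Module.Finite 𝕜 E]
    {p : M →ₗ[𝕜] E →ₗ[𝕜] 𝕜} {C : PointedCone 𝕜 E} (hC : C.DualFG p) : C.FG := by
  classical
  obtain ⟨s, rfl⟩ := hC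
  induction s using Finset.induction_on with
  | empty => simpa using fg_top
  | insert x s _ ih =>
    rw [Finset.coe_insert, dual_insert, dual_singleton, inf_comm]
    exact fg_inf_comap_positive ih (p x)

theorem exists_support_ssubset_of_not_linearIndepOn [Fintype ι] {c : ι → 𝕜} (hc : 0 ≤ c)
    (hdep : ¬LinearIndepOn 𝕜 v (Function.support c)) :
    ∃ c' : ι → 𝕜, 0 ≤ c' ∧ Function.support c' ⊂ Function.support c ∧
      ∑ i, c' i • v i = ∑ i, c i • v i := by
  classical
  obtain ⟨g, hgc, hg0, i₀, hgi₀⟩ : ∃ g : ι → 𝕜, Function.support g ⊆ Function.support c ∧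
      ∑ i, g i • v i = 0 ∧ ∃ i, 0 < g i := by
    simp only [linearIndepOn_iff'', not_forall] at hdep
    obtain ⟨t, g, hts, hgt, hg0, i, hit, hgi⟩ := hdep
    have hsupp : Function.support g ⊆ t := fun i hi ↦ by_contra fun h ↦ hi (hgt i h)
    have hsum : ∑ i, g i • v i = 0 := by
      rw [← Finset.sum_subset (Finset.subset_univ t) fun i _ hi ↦ by simp [hgt i hi], hg0]
    rcases Ne.lt_or_gt hgi with hneg | hpos
    · exact ⟨-g, by simpa using hsupp.trans hts, by simp [hsum], i, by simpa using hneg⟩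
    · exact ⟨g, hsupp.trans hts, hsum, i, hpos⟩
  obtain ⟨j, hj, hjmin⟩ := Finset.exists_min_image (Finset.univ.filter (0 < g ·))
    (fun i ↦ c i / g i) ⟨i₀, by simpa using hgi₀⟩
  have hgj : 0 < g j := (Finset.mem_filter.mp hj).2
  -- `r` is the longest step along `-g` that keeps `c` nonnegative; it kills the coefficient at `j`.
  set r := c j / g j
  refine ⟨fun i ↦ c i - r * g i, fun i ↦ ?_, ?_, ?_⟩
  · rcases le_or_gt (g i) 0 with hgi | hgi
    · have : 0 ≤ r := div_nonneg (hc j) hgj.le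
      nlinarith [hc i]
    · have := hjmin i (by simpa using hgi)
      rw [le_div_iff₀ hgi] at this
      simpa using this
  · refine ssubset_of_subset_not_subset (fun i hi ↦ by_contra fun hci ↦ hi ?_) fun h ↦ ?_
    · have : g i = 0 := by_contra fun hgi ↦ hci (hgc hgi)
      simp [this, Function.notMem_support.mp hci]
    · exact h (hgc hgj.ne') (by simp [r, div_mul_cancel₀ _ hgj.ne'])
  · simp [sub_smul, Finset.sum_sub_distrib, mul_smul, ← Finset.smul_sum, hg0]

theorem exists_linearIndepOn_mem_hull_image [Finite ι] {x : E} (hx : x ∈ hull 𝕜 (range v)) :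
    ∃ t : Set ι, LinearIndepOn 𝕜 v t ∧ x ∈ hull 𝕜 (v '' t) := by
  have := Fintype.ofFinite ι
  obtain ⟨c₀, hc₀, hx₀⟩ := mem_hull_range_iff.mp hx
  obtain ⟨_, ⟨c, ⟨hc, rfl⟩, rfl⟩, hmin⟩ := wellFounded_lt.has_min
    (Function.support '' {c : ι → 𝕜 | 0 ≤ c ∧ ∑ i, c i • v i = x}) ⟨_, c₀, ⟨hc₀, hx₀⟩, rfl⟩
  refine ⟨Function.support c, by_contra fun hdep ↦ ?_, sum_mem fun i _ ↦ ?_⟩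
  · obtain ⟨c', hc', hlt, hsum⟩ := exists_support_ssubset_of_not_linearIndepOn hc hdep
    exact hmin _ ⟨c', ⟨hc', hsum⟩, rfl⟩ hlt
  · by_cases hci : c i = 0
    · simp [hci]
    · exact smul_mem _ (hc i) (subset_hull (mem_image_of_mem v hci))

end OrderedField

section TopologicalVectorSpace

variable {E : Type*} [AddCommGroup E] [Module ℝ E] [TopologicalSpace E] [IsTopologicalAddGroup E]
  [ContinuousSMul ℝ E] [T2Space E]

theorem isClosed_hull_range_of_linearIndependent {ι : Type*} [Finite ι] {v : ι → E}
    (hv : LinearIndependent ℝ v) : IsClosed (hull ℝ (range v) : Set E) := by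
  have := Fintype.ofFinite ι
  have hhull : (hull ℝ (range v) : Set E) = Fintype.linearCombination ℝ v '' Ici 0 := by
    ext x
    simp [mem_hull_range_iff, Fintype.linearCombination_apply]
  rw [hhull]
  exact (LinearMap.isClosedEmbedding_of_injective (LinearMap.ker_eq_bot.mpr
    hv.fintypeLinearCombination_injective)).isClosedMap _ isClosed_Ici

theorem isClosed_of_fg {C : PointedCone ℝ E} (hC : C.FG) : IsClosed (C : Set E) := by
  obtain ⟨k, v, rfl⟩ := Submodule.fg_iff_exists_fin_generating_family.mp hC
  have hunion : (hull ℝ (range v) : Set E) =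
      ⋃ t ∈ {t : Set (Fin k) | LinearIndepOn ℝ v t}, hull ℝ (v '' t) := by
    refine subset_antisymm (fun x hx ↦ ?_) (iUnion₂_subset fun t _ ↦ ?_)
    · obtain ⟨t, ht, hxt⟩ := exists_linearIndepOn_mem_hull_image hx
      exact mem_biUnion ht hxt
    · exact Submodule.span_mono (image_subset_range v t)
  rw [hunion]
  refine (toFinite _).isClosed_biUnion fun t ht ↦ ?_
  rw [image_eq_range]
  exact isClosed_hull_range_of_linearIndependent ht

theorem mem_of_fg_of_forall_inner_nonneg {F : Type*} [NormedAddCommGroup F]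
    [InnerProductSpace ℝ F] [CompleteSpace F] {C : PointedCone ℝ F} (hC : C.FG) {x : F}
    (hx : ∀ y, (∀ z ∈ C, 0 ≤ ⟪z, y⟫) → 0 ≤ ⟪x, y⟫) : x ∈ C := by
  by_contra hxC
  obtain ⟨y, hy, hxy⟩ := ProperCone.hyperplane_separation' (C := ⟨C, isClosed_of_fg hC⟩) hxC
  exact (hx y hy).not_gt hxy

end TopologicalVectorSpace

end PointedCone

section IntrinsicInterior

variable {E : Type*} [AddCommGroup E] [Module ℝ E] [TopologicalSpace E] [IsTopologicalAddGroup E]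
  [ContinuousSMul ℝ E] {S : Set E} {m : E}

theorem exists_pos_add_smul_sub_mem_of_mem_intrinsicInterior (hm : m ∈ intrinsicInterior ℝ S)
    {c : E} (hc : c ∈ S) : ∃ ε : ℝ, 0 < ε ∧ m + ε • (m - c) ∈ S := by
  obtain ⟨y, hy, rfl⟩ := mem_intrinsicInterior.mp hm
  let φ : ℝ → affineSpan ℝ S := fun t ↦ ⟨t • ((y : E) -ᵥ c) +ᵥ (y : E),
    AffineSubspace.smul_vsub_vadd_mem _ t y.2 (subset_affineSpan ℝ S hc) y.2⟩
  have hφ : Continuous φ := by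
    refine Continuous.subtype_mk ?_ _
    fun_prop
  have hφ0 : φ 0 = y := by ext; simp [φ]
  have hpre : ∀ᶠ t in 𝓝 0, (φ t : E) ∈ S :=
    hφ.continuousAt.eventually_mem (hφ0 ▸ mem_interior_iff_mem_nhds.mp hy)
  obtain ⟨ε, hεS, hε⟩ :=
    ((eventually_nhdsWithin_of_eventually_nhds hpre).and (self_mem_nhdsWithin (s := Ioi 0))).exists
  refine ⟨ε, hε, ?_⟩
  simpa [φ, add_comm] using hεS

theorem eq_zero_of_mem_intrinsicInterior_of_nonneg (hm : m ∈ intrinsicInterior ℝ S)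
    {f : E →ₗ[ℝ] ℝ} (hf : ∀ c ∈ S, 0 ≤ f c) (hfm : f m = 0) {c : E} (hc : c ∈ S) : f c = 0 := by
  obtain ⟨ε, hε, hmem⟩ := exists_pos_add_smul_sub_mem_of_mem_intrinsicInterior hm hc
  have := hf _ hmem
  simp only [map_add, map_smul, map_sub, hfm, smul_eq_mul, zero_sub, zero_add] at this
  nlinarith [hf c hc]

end IntrinsicInterior

section Separation

variable {n : ℕ}

local notation "ℝⁿ" => EuclideanSpace ℝ (Fin n)

namespace IsPolyhedralCone

theorem exists_fg {σ : Set ℝⁿ} (h : IsPolyhedralCone σ) :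
    ∃ C : PointedCone ℝ ℝⁿ, C.FG ∧ (C : Set ℝⁿ) = σ := by
  obtain ⟨s, rfl⟩ := h
  exact ⟨PointedCone.dual (innerₗ ℝⁿ) s, PointedCone.DualFG.fg ⟨s, rfl⟩, by ext; simp⟩

theorem zero_mem {σ : Set ℝⁿ} (h : IsPolyhedralCone σ) : 0 ∈ σ := by
  obtain ⟨C, -, rfl⟩ := h.exists_fg
  exact C.zero_mem

theorem add_mem {σ : Set ℝⁿ} (h : IsPolyhedralCone σ) {a b : ℝⁿ} (ha : a ∈ σ) (hb : b ∈ σ) :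
    a + b ∈ σ := by
  obtain ⟨C, -, rfl⟩ := h.exists_fg
  exact C.add_mem ha hb

theorem mem_sub_of_forall_dualCone {σ₁ σ₂ : Set ℝⁿ} (hp₁ : IsPolyhedralCone σ₁)
    (hp₂ : IsPolyhedralCone σ₂) {x : ℝⁿ} (hx : ∀ y ∈ dualCone (σ₁ - σ₂), 0 ≤ ⟪y, x⟫) :
    x ∈ σ₁ - σ₂ := by
  obtain ⟨C₁, hC₁, rfl⟩ := hp₁.exists_fg
  obtain ⟨C₂, hC₂, rfl⟩ := hp₂.exists_fg
  have hcoe : ((C₁ ⊔ -C₂ : PointedCone ℝ ℝⁿ) : Set ℝⁿ) = (C₁ : Set ℝⁿ) - (C₂ : Set ℝⁿ) := by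
    rw [Submodule.coe_sup, Submodule.coe_set_neg, sub_eq_add_neg]
  rw [← hcoe]
  refine PointedCone.mem_of_fg_of_forall_inner_nonneg
    (hC₁.sup (PointedCone.fg_neg hC₂)) fun y hy ↦ ?_
  rw [real_inner_comm]
  exact hx y fun z hz ↦ by
    rw [real_inner_comm]
    exact hy z (by rwa [← SetLike.mem_coe, hcoe])

end IsPolyhedralCone

theorem IsFaceOf.mem_of_add_mem {τ σ : Set ℝⁿ} (h : IsFaceOf τ σ) {a b : ℝⁿ} (ha : a ∈ σ)
    (hb : b ∈ σ) (hab : a + b ∈ τ) : a ∈ τ := by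
  obtain ⟨m, hm, rfl⟩ := h
  have hsum : ⟪m, a⟫ + ⟪m, b⟫ = 0 := by simpa [inner_add_right] using hab.2
  have ha' : 0 ≤ ⟪m, a⟫ := hm a ha
  have hb' : 0 ≤ ⟪m, b⟫ := hm b hb
  exact ⟨ha, show ⟪m, a⟫ = 0 by linarith⟩

theorem IsFaceOf.sub_mem {τ σ : Set ℝⁿ} (h : IsFaceOf τ σ) {a b : ℝⁿ} (ha : a ∈ τ) (hb : b ∈ τ)
    (hab : a - b ∈ σ) : a - b ∈ τ := by
  obtain ⟨m, -, rfl⟩ := h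
  exact ⟨hab, by simp [inner_sub_right, ha.2.out, hb.2.out]⟩

theorem dualCone_sub {σ₁ σ₂ : Set ℝⁿ} (h₁ : 0 ∈ σ₁) (h₂ : 0 ∈ σ₂) :
    dualCone (σ₁ - σ₂) = dualCone σ₁ ∩ -dualCone σ₂ := by
  ext y
  refine ⟨fun hy ↦ ⟨fun a ha ↦ ?_, fun b hb ↦ ?_⟩, ?_⟩
  · simpa using hy (a - 0) (Set.sub_mem_sub ha h₂)
  · simpa [inner_neg_left] using hy (0 - b) (Set.sub_mem_sub h₁ hb)
  · rintro ⟨hy₁, hy₂⟩ _ ⟨a, ha, b, hb, rfl⟩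
    have := hy₂ b hb
    simp only [inner_neg_left] at this
    simp only [inner_sub_right]
    linarith [hy₁ a ha]

theorem exists_sub_eq_of_mem_sub_of_neg_mem_sub {σ₁ σ₂ : Set ℝⁿ} (hp₁ : IsPolyhedralCone σ₁)
    (hp₂ : IsPolyhedralCone σ₂) (hface₁ : IsFaceOf (σ₁ ∩ σ₂) σ₁)
    (hface₂ : IsFaceOf (σ₁ ∩ σ₂) σ₂) {x : ℝⁿ} (hx : x ∈ σ₁ - σ₂) (hx' : -x ∈ σ₁ - σ₂) :
    ∃ a ∈ σ₁ ∩ σ₂, ∃ b ∈ σ₁ ∩ σ₂, a - b = x := by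
  obtain ⟨a, ha, b, hb, rfl⟩ := Set.mem_sub.mp hx
  obtain ⟨a', ha', b', hb', hab'⟩ := Set.mem_sub.mp hx'
  have hsum : a + a' = b + b' := by
    rw [← sub_eq_zero, show a + a' - (b + b') = (a' - b') - -(a - b) by abel, hab', sub_self]
  have hτ : a + a' ∈ σ₁ ∩ σ₂ := ⟨hp₁.add_mem ha ha', hsum ▸ hp₂.add_mem hb hb'⟩
  exact ⟨a, hface₁.mem_of_add_mem ha ha' hτ, b, hface₂.mem_of_add_mem hb hb' (hsum ▸ hτ), rfl⟩

theorem exists_sub_eq_of_inner_eq_zero {σ₁ σ₂ : Set ℝⁿ} (hp₁ : IsPolyhedralCone σ₁)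
    (hp₂ : IsPolyhedralCone σ₂) (hface₁ : IsFaceOf (σ₁ ∩ σ₂) σ₁)
    (hface₂ : IsFaceOf (σ₁ ∩ σ₂) σ₂) {m : ℝⁿ} (hm : m ∈ intrinsicInterior ℝ (dualCone σ₁ ∩ -dualCone σ₂)) {x : ℝⁿ}
    (hx : ∀ c ∈ dualCone σ₁ ∩ -dualCone σ₂, 0 ≤ ⟪c, x⟫) (hmx : ⟪m, x⟫ = 0) :
    ∃ a ∈ σ₁ ∩ σ₂, ∃ b ∈ σ₁ ∩ σ₂, a - b = x := by
  have hperp : ∀ c ∈ dualCone (σ₁ - σ₂), ⟪c, x⟫ = 0 := by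
    rw [dualCone_sub hp₁.zero_mem hp₂.zero_mem]
    intro c hc
    simpa [real_inner_comm] using eq_zero_of_mem_intrinsicInterior_of_nonneg hm
      (f := (innerₗ ℝⁿ).flip x) (by simpa [real_inner_comm] using hx)
      (by simpa [real_inner_comm]) hc
  refine exists_sub_eq_of_mem_sub_of_neg_mem_sub hp₁ hp₂ hface₁ hface₂ ?_ ?_ <;>
    refine hp₁.mem_sub_of_forall_dualCone hp₂ fun y hy ↦ ?_
  · exact (hperp y hy).ge
  · simp [inner_neg_right, hperp y hy]

end Separation

/-- Separation lemma: if `σ₁, σ₂` are polyhedral closed convex cones such that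
`τ = σ₁ ∩ σ₂` is a face of each, then for any `m` in the relative interior of
`σ₁∨ ∩ (−σ₂∨)` one has `σ₁ ∩ H_m = τ = σ₂ ∩ H_m`. -/
theorem separation_lemma {n : ℕ}
    (σ₁ σ₂ : Set (EuclideanSpace ℝ (Fin n)))
    (hp₁ : IsPolyhedralCone σ₁) (hp₂ : IsPolyhedralCone σ₂)
    (hface₁ : IsFaceOf (σ₁ ∩ σ₂) σ₁) (hface₂ : IsFaceOf (σ₁ ∩ σ₂) σ₂)
    (m : EuclideanSpace ℝ (Fin n))
    (hm : m ∈ intrinsicInterior ℝ (dualCone σ₁ ∩ -dualCone σ₂)) :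
    σ₁ ∩ {x | ⟪m, x⟫ = 0} = σ₁ ∩ σ₂ ∧ σ₂ ∩ {x | ⟪m, x⟫ = 0} = σ₁ ∩ σ₂ := by
  obtain ⟨hm₁, hm₂⟩ := intrinsicInterior_subset hm
  have hτ : σ₁ ∩ σ₂ ⊆ {x | ⟪m, x⟫ = 0} := fun x hx ↦
    le_antisymm (by simpa [inner_neg_left] using hm₂ x hx.2) (hm₁ x hx.1)
  refine ⟨subset_antisymm (fun x ⟨hx, hmx⟩ ↦ ?_) fun x hx ↦ ⟨hx.1, hτ hx⟩,
    subset_antisymm (fun x ⟨hx, hmx⟩ ↦ ?_) fun x hx ↦ ⟨hx.2, hτ hx⟩⟩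
  · obtain ⟨a, ha, b, hb, rfl⟩ :=
      exists_sub_eq_of_inner_eq_zero hp₁ hp₂ hface₁ hface₂ hm (fun c hc ↦ hc.1 x hx) hmx
    exact hface₁.sub_mem ha hb hx
  · obtain ⟨a, ha, b, hb, hab⟩ := exists_sub_eq_of_inner_eq_zero hp₁ hp₂ hface₁ hface₂ hm
      (x := -x) (fun c hc ↦ by simpa [inner_neg_left, inner_neg_right] using hc.2 x hx)
      (by simpa [inner_neg_right] using hmx)
    rw [← neg_neg x, ← hab, neg_sub] at hx ⊢
    exact hface₂.sub_mem hb ha hx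
end

section
/- Let σ be a polyhedral closed convex cone in ℝ^n and let τ = σ ∩ H_m be the face of σ cut out by the hyperplane H_m = {n : ⟨m,n⟩ = 0} for some m ∈ σ∨. Then the dual cone of τ satisfies τ∨ = σ∨ + ℝ_{≥0}·(−m). -/
open scoped RealInnerProductSpace Pointwise

/-!
Write `σ = {x | ∀ a ∈ s, 0 ≤ ⟪a, x⟫}` for a finite `s`. Since `m ∈ σ∨`, the face `τ` is again
polyhedral, cut out by `s ∪ {-m}`. By Farkas' lemma the dual of the cone cut out by a finite set
is the conic hull of that set, so `τ∨ = cone (s ∪ {-m}) = cone s + ℝ≥0 • (-m) = σ∨ + ℝ≥0 • (-m)`.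
Farkas' lemma is double duality for closed convex cones, once one knows that a finitely generated
cone is closed: by the conic Carathéodory theorem it is a finite union of simplicial cones, and a
simplicial cone is the image of the closed orthant under an injective linear map.
-/

theorem Finset.exists_sub_mul_nonneg_and_eq_zero {ι 𝕜 : Type*} [Field 𝕜] [LinearOrder 𝕜]
    [IsStrictOrderedRing 𝕜] {s : Finset ι} {l c : ι → 𝕜}
    (hl : ∀ i ∈ s, 0 ≤ l i) (hc : ∃ i ∈ s, 0 < c i) :
    ∃ r : 𝕜, (∀ i ∈ s, 0 ≤ l i - r * c i) ∧ ∃ b ∈ s, l b - r * c b = 0 := by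
  classical
  obtain ⟨b, hb, hmin⟩ := (s.filter fun i => 0 < c i).exists_min_image (fun i => l i / c i)
    (by simpa [Finset.filter_nonempty_iff] using hc)
  rw [Finset.mem_filter] at hb
  have hr : 0 ≤ l b / c b := div_nonneg (hl b hb.1) hb.2.le
  refine ⟨l b / c b, fun i hi => ?_, b, hb.1, by rw [div_mul_cancel₀ _ hb.2.ne', sub_self]⟩
  rcases lt_or_ge 0 (c i) with hci | hci
  · have := hmin i (Finset.mem_filter.mpr ⟨hi, hci⟩)
    rw [le_div_iff₀ hci] at this
    linarith
  · nlinarith [hl i hi]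

namespace PointedCone

section LinearOrderedField

variable {𝕜 E : Type*} [Field 𝕜] [LinearOrder 𝕜] [IsStrictOrderedRing 𝕜]
  [AddCommGroup E] [Module 𝕜 E]

theorem mem_hull_finset_iff {s : Finset E} {x : E} :
    x ∈ hull 𝕜 (s : Set E) ↔ ∃ l : E → 𝕜, (∀ a ∈ s, 0 ≤ l a) ∧ ∑ a ∈ s, l a • a = x := by
  constructor
  · intro hx
    obtain ⟨f, -, rfl⟩ := Submodule.mem_span_finset.mp hx
    exact ⟨fun a => f a, fun a _ => (f a).2, rfl⟩
  · rintro ⟨l, hl, rfl⟩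
    exact Submodule.sum_mem _ fun a ha => (hull 𝕜 (s : Set E)).smul_mem (hl a ha) (subset_hull ha)

theorem exists_mem_hull_erase_of_not_linearIndepOn [DecidableEq E] {s : Finset E}
    (hs : ¬LinearIndepOn 𝕜 id (s : Set E)) {x : E} (hx : x ∈ hull 𝕜 (s : Set E)) :
    ∃ b ∈ s, x ∈ hull 𝕜 (s.erase b : Set E) := by
  obtain ⟨l, hl, rfl⟩ := mem_hull_finset_iff.mp hx
  obtain ⟨c, hc, hpos⟩ : ∃ c : E → 𝕜, ∑ a ∈ s, c a • a = 0 ∧ ∃ a ∈ s, 0 < c a := by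
    obtain ⟨c, hc, a, ha, hca⟩ := not_linearIndepOn_finset_iff.mp hs
    rcases hca.lt_or_gt with hneg | hpos
    · exact ⟨-c, by simpa [neg_smul] using hc, a, ha, by simpa using hneg⟩
    · exact ⟨c, hc, a, ha, hpos⟩
  obtain ⟨r, hnonneg, b, hb, hzero⟩ := Finset.exists_sub_mul_nonneg_and_eq_zero hl hpos
  refine ⟨b, hb, mem_hull_finset_iff.mpr ⟨fun a => l a - r * c a,
    fun a ha => hnonneg a (Finset.mem_of_mem_erase ha), ?_⟩⟩
  rw [Finset.sum_erase _ (by simp only [hzero, zero_smul])]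
  simp only [sub_smul, mul_smul, Finset.sum_sub_distrib, ← Finset.smul_sum, hc, smul_zero,
    sub_zero]

theorem exists_linearIndepOn_of_mem_hull (s : Finset E) {x : E} (hx : x ∈ hull 𝕜 (s : Set E)) :
    ∃ t ⊆ s, LinearIndepOn 𝕜 id (t : Set E) ∧ x ∈ hull 𝕜 (t : Set E) := by
  classical
  induction s using Finset.strongInduction with
  | H s ih =>
    by_cases hs : LinearIndepOn 𝕜 id (s : Set E)
    · exact ⟨s, subset_rfl, hs, hx⟩
    obtain ⟨b, hb, hxb⟩ := exists_mem_hull_erase_of_not_linearIndepOn hs hx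
    obtain ⟨t, hts, ht, hxt⟩ := ih _ (Finset.erase_ssubset hb) hxb
    exact ⟨t, hts.trans (Finset.erase_subset b s), ht, hxt⟩

theorem coe_hull_insert (v : E) (s : Set E) :
    (hull 𝕜 (insert v s) : Set E) = hull 𝕜 s + {x | ∃ c : 𝕜, 0 ≤ c ∧ x = c • v} := by
  rw [show hull 𝕜 (insert v s) = _ from Submodule.span_insert v s, Submodule.coe_sup, add_comm]
  congr 1
  ext x
  simp only [SetLike.mem_coe, Submodule.mem_span_singleton, Set.mem_ofPred_eq]
  constructor
  · rintro ⟨c, rfl⟩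
    exact ⟨c, c.2, rfl⟩
  · rintro ⟨c, hc, rfl⟩
    exact ⟨⟨c, hc⟩, rfl⟩

end LinearOrderedField

variable {E : Type*} [AddCommGroup E] [Module ℝ E] [TopologicalSpace E] [IsTopologicalAddGroup E]
  [ContinuousSMul ℝ E] [T2Space E]

theorem IsSimplicial.isClosed {C : PointedCone ℝ E} (hC : C.IsSimplicial) :
    IsClosed (C : Set E) := by
  obtain ⟨s, hs, hli, rfl⟩ := hC
  have := hs.fintype
  set f := Fintype.linearCombination ℝ (Subtype.val : s → E)
  have hf : Topology.IsClosedEmbedding f := LinearMap.isClosedEmbedding_of_injective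
    (LinearMap.ker_eq_bot.mpr hli.fintypeLinearCombination_injective)
  have himage : (hull ℝ s : Set E) = f '' Set.univ.pi fun _ => Set.Ici 0 := by
    ext x
    simp only [SetLike.mem_coe, Submodule.mem_span_iff_of_fintype, Set.mem_image, Set.mem_pi,
      Set.mem_univ, Set.mem_Ici, true_implies, f, Fintype.linearCombination_apply]
    constructor
    · rintro ⟨c, rfl⟩
      exact ⟨fun a => c a, fun a => (c a).2, rfl⟩
    · rintro ⟨l, hl, rfl⟩
      exact ⟨fun a => ⟨l a, hl a⟩, rfl⟩
  rw [himage]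
  exact hf.isClosedMap _ (isClosed_set_pi fun _ _ => isClosed_Ici)

theorem isClosed_hull_finset (s : Finset E) : IsClosed (hull ℝ (s : Set E) : Set E) := by
  classical
  have hunion : (hull ℝ (s : Set E) : Set E) =
      ⋃ (t : Finset E) (_ : t ∈ s.powerset.filter fun t : Finset E =>
        LinearIndepOn ℝ id (t : Set E)), hull ℝ (t : Set E) := by
    ext x
    simp only [SetLike.mem_coe, Set.mem_iUnion, Finset.mem_filter, Finset.mem_powerset,
      exists_prop]
    constructor
    · intro hx
      obtain ⟨t, hts, ht, hxt⟩ := exists_linearIndepOn_of_mem_hull s hx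
      exact ⟨t, ⟨hts, ht⟩, hxt⟩
    · rintro ⟨t, ⟨hts, -⟩, hxt⟩
      exact Submodule.span_mono (Finset.coe_subset.mpr hts) hxt
  rw [hunion]
  exact isClosed_biUnion_finset fun t ht =>
    (IsSimplicial.hull t.finite_toSet (Finset.mem_filter.mp ht).2).isClosed

end PointedCone

namespace ProperCone

open PointedCone

variable {E : Type*} [NormedAddCommGroup E] [InnerProductSpace ℝ E] [CompleteSpace E]

theorem innerDual_hull (s : Set E) : innerDual (hull ℝ s : Set E) = innerDual s := by
  ext y
  exact SetLike.ext_iff.mp (PointedCone.dual_hull (p := innerₗ E) s) y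

theorem innerDual_inter_eq_innerDual_insert_neg {s : Set E} {m : E}
    (hm : ∀ x ∈ innerDual s, 0 ≤ ⟪m, x⟫) :
    (innerDual s : Set E) ∩ {x | ⟪m, x⟫ = 0} = innerDual (insert (-m) s) := by
  ext x
  simp only [Set.mem_inter_iff, SetLike.mem_coe, mem_innerDual, Set.mem_insert_iff,
    forall_eq_or_imp, inner_neg_left, neg_nonneg, Set.mem_ofPred_eq]
  exact ⟨fun ⟨hx, hmx⟩ => ⟨hmx.le, hx⟩, fun ⟨hmx, hx⟩ => ⟨hx, le_antisymm hmx (hm x hx)⟩⟩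

theorem coe_innerDual_innerDual_finset (s : Finset E) :
    (innerDual (innerDual (s : Set E) : Set E) : Set E) = hull ℝ (s : Set E) := by
  let C : ProperCone ℝ E := ⟨hull ℝ (s : Set E), isClosed_hull_finset s⟩
  rw [← innerDual_hull (s : Set E)]
  exact congrArg SetLike.coe (innerDual_innerDual C)

end ProperCone

open ProperCone PointedCone

theorem dualCone_eq_innerDual {n : ℕ} (S : Set (EuclideanSpace ℝ (Fin n))) :
    dualCone S = innerDual S := by
  ext v
  simp only [dualCone, SetLike.mem_coe, mem_innerDual, real_inner_comm v, Set.mem_ofPred_eq]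

/-- For a polyhedral closed convex cone `σ` and the face `τ = σ ∩ {⟪m,·⟫ = 0}` cut out by
`m ∈ σ∨`, the dual cone of `τ` is `σ∨ + ℝ≥0·(−m)` (Minkowski sum). -/
theorem dualCone_face {n : ℕ}
    (σ : Set (EuclideanSpace ℝ (Fin n)))
    (hp : IsPolyhedralCone σ)
    (m : EuclideanSpace ℝ (Fin n)) (hm : m ∈ dualCone σ) :
    dualCone (σ ∩ {x | ⟪m, x⟫ = 0}) =
      dualCone σ + {x | ∃ c : ℝ, 0 ≤ c ∧ x = c • (-m)} := by
  obtain ⟨s, rfl⟩ := hp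
  have hσ : {x | ∀ a ∈ s, 0 ≤ ⟪a, x⟫} = (innerDual (s : Set (EuclideanSpace ℝ (Fin n))) : Set _) :=
    by ext; simp
  rw [hσ] at hm ⊢
  rw [dualCone_eq_innerDual, innerDual_inter_eq_innerDual_insert_neg hm, dualCone_eq_innerDual,
    ← Finset.coe_insert, coe_innerDual_innerDual_finset, coe_innerDual_innerDual_finset,
    Finset.coe_insert, coe_hull_insert]
end

section
/- Let k be a nonzero commutative ring and let Λ_≥ = k[ℝ_{≥0}] be the monoid algebra of the additive monoid of nonnegative reals. Let Λ_> be the ideal generated by the monoid elements t^a with a > 0. Then Λ_> is not a finitely generated ideal of Λ_≥. -/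
open scoped NNReal

/-!
The ideal `Λ_>` is the directed union, over `a > 0`, of the ideals of elements supported in the
open ray `(a, ∞)`: a product never lowers the bottom of the support because the exponents are
nonnegative, and each generator `t^b` is supported above any `a ∈ (0, b)`. A finitely generated ideal is a
compact element of the lattice of ideals, so `Λ_>` would lie in one of these ideals, which
`t^a` itself does not.
-/

namespace AddMonoidAlgebra

variable {k : Type*} {M : Type*} [Semiring k] [AddCommMonoid M]

section PartialOrder

variable [PartialOrder M] [CanonicallyOrderedAdd M]

variable (k) in
def supportedIoi (a : M) : Ideal k[M] where
  carrier := {f | ∀ b ∈ f.coeff.support, a < b}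
  zero_mem' := by simp
  add_mem' {f g} hf hg b hb := by
    classical
    rcases Finset.mem_union.1 (Finsupp.support_add hb) with hb | hb
    exacts [hf b hb, hg b hb]
  smul_mem' c f hf b hb := by
    classical
    obtain ⟨x, -, y, hy, rfl⟩ := Finset.mem_add.1 (support_coeff_mul_subset c f hb)
    exact (hf y hy).trans_le le_add_self

theorem supportedIoi_antitone : Antitone (supportedIoi k : M → Ideal k[M]) :=
  fun _ _ hab _ hf b hb => hab.trans_lt (hf b hb)

theorem single_mem_supportedIoi {a b : M} (hab : a < b) (r : k) :
    single b r ∈ supportedIoi k a := by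
  intro c hc
  rw [coeff_single] at hc
  rwa [Finset.mem_singleton.1 (Finsupp.support_single_subset hc)]

theorem single_one_notMem_supportedIoi [Nontrivial k] (a : M) :
    single a (1 : k) ∉ supportedIoi k a := fun h =>
  lt_irrefl a (h a (by simp [coeff_single]))

end PartialOrder

variable [LinearOrder M] [CanonicallyOrderedAdd M]

theorem span_single_pos_le_sSup_supportedIoi [DenselyOrdered M] :
    Ideal.span {f : k[M] | ∃ a : M, 0 < a ∧ f = single a 1} ≤
      sSup (supportedIoi k '' Set.Ioi 0) := by
  refine Ideal.span_le.2 ?_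
  rintro _ ⟨b, hb, rfl⟩
  obtain ⟨a, ha, hab⟩ := exists_between hb
  exact le_sSup (Set.mem_image_of_mem (supportedIoi k) ha) (single_mem_supportedIoi hab 1)

theorem directedOn_supportedIoi_pos :
    DirectedOn (· ≤ ·) (supportedIoi k '' Set.Ioi (0 : M)) :=
  directedOn_image.2 fun a ha b hb =>
    ⟨min a b, lt_min ha hb, supportedIoi_antitone (min_le_left a b),
      supportedIoi_antitone (min_le_right a b)⟩

theorem not_fg_span_single_pos [DenselyOrdered M] [Nontrivial k] [Nontrivial M] :
    ¬ (Ideal.span {f : k[M] | ∃ a : M, 0 < a ∧ f = single a 1}).FG := by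
  intro hfg
  obtain ⟨m, hm⟩ := exists_ne (0 : M)
  obtain ⟨_, ⟨a, ha, rfl⟩, hle⟩ :=
    (CompleteLattice.isCompactElement_iff_le_of_directed_sSup_le _ _ |>.1
      ((Submodule.fg_iff_compact _).1 hfg) _ (Set.Nonempty.image _ ⟨m, pos_iff_ne_zero.2 hm⟩)
      directedOn_supportedIoi_pos span_single_pos_le_sSup_supportedIoi)
  exact single_one_notMem_supportedIoi a (hle (Ideal.subset_span ⟨a, ha, rfl⟩))

end AddMonoidAlgebra

/-- Over any nonzero commutative ring `k`, the maximal monomial ideal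
`Λ_> = (t^a : a > 0)` of the polynomial Novikov ring `Λ_≥ = k[ℝ_{≥0}]` is not a finitely
generated ideal. -/
theorem novikov_maximal_ideal_not_fg (k : Type*) [CommRing k] [Nontrivial k] :
    ¬ (Ideal.span {f : AddMonoidAlgebra k ℝ≥0 |
        ∃ a : ℝ≥0, 0 < a ∧ f = AddMonoidAlgebra.single a 1}).FG :=
  AddMonoidAlgebra.not_fg_span_single_pos
end
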